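/- arXiv:math/0211298 — 3 statements merged into one kernel-verified Lean document; each statement's English description precedes it below -/
import Mathlib

section
/- If X is an infinite-dimensional Banach space and D is a countably incomplete ultrafilter on a set I, then the canonical embedding d_X : X → (X)_D is not surjective, i.e., (X)_D \ d_X(X) ≠ ∅. -/
open Filter Topology
open scoped ENNReal

noncomputable section

universe u

/-- The subspace `N_D ⊆ ℓ∞(I, X)` of families whose norms tend to `0` along the
ultrafilter `D`. -/
def ultraNullIdeal (I : Type u) (D : Ultrafilter I) (X : Type u)
    [NormedAddCommGroup X] [NormedSpace ℝ X] :
    Submodule ℝ (lp (fun _ : I => X) ∞) where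
  carrier := {f | Filter.Tendsto (fun i => ‖f i‖) (D : Filter I) (nhds 0)}
  zero_mem' := by
    simpa using (tendsto_const_nhds :
      Filter.Tendsto (fun _ : I => (0 : ℝ)) (D : Filter I) (nhds 0))
  add_mem' := by
    intro f g hf hg
    have h := hf.add hg
    rw [add_zero] at h
    refine squeeze_zero (fun i => norm_nonneg _) (fun i => ?_) h
    simpa using norm_add_le (f i) (g i)
  smul_mem' := by
    intro c f hf
    have h : Filter.Tendsto (fun i => ‖c‖ * ‖f i‖) (D : Filter I) (nhds 0) := by
      simpa using hf.const_mul ‖c‖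
    refine squeeze_zero (fun i => norm_nonneg _) (fun i => ?_) h
    simp [norm_smul]

/-- The Banach-space ultrapower `(X)_D = ℓ∞(I,X) / N_D`, with the quotient norm. -/
abbrev Ultrapower (I : Type u) (D : Ultrafilter I) (X : Type u)
    [NormedAddCommGroup X] [NormedSpace ℝ X] : Type u :=
  lp (fun _ : I => X) ∞ ⧸ ultraNullIdeal I D X

/-- The bounded family constantly equal to `x`, as an element of `ℓ∞(I, X)`. -/
def constLp (I : Type u) (X : Type u) [NormedAddCommGroup X] [NormedSpace ℝ X] (x : X) :
    lp (fun _ : I => X) ∞ :=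
  ⟨fun _ => x, memℓp_infty ⟨‖x‖, by rintro r ⟨i, rfl⟩; exact le_rfl⟩⟩

/-- The canonical (diagonal) embedding `d_X : X → (X)_D`. -/
def diagEmbedding (I : Type u) (D : Ultrafilter I) (X : Type u)
    [NormedAddCommGroup X] [NormedSpace ℝ X] (x : X) : Ultrapower I D X :=
  Submodule.Quotient.mk (constLp I X x)

/-- An ultrafilter `D` is `μ`-complete if the intersection of any family of fewer than `μ`
members of `D` again belongs to `D`. -/
def UltrafilterComplete {I : Type u} (D : Ultrafilter I) (μ : Cardinal.{u}) : Prop :=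
  ∀ G : Set (Set I), (∀ g ∈ G, g ∈ D) → Cardinal.mk G < μ → ⋂₀ G ∈ D

/-! A countable family of members of `D` whose intersection is not in `D` yields `n : I → ℕ`
tending to infinity along `D` (`n i` is the first stage at which `i` leaves the sets). Riesz's
lemma gives a bounded `1`-separated sequence `y` in `X`. If the class of the bounded family
`y ∘ n` were `d_X x`, then `y (n i) → x` along `D`, so two indices with different values of `n`
would put two points of `y` within distance `1` of each other. -/

open Cardinal

theorem exists_seq_mem_iInter_eq_empty_of_not_ultrafilterComplete {I : Type u} {D : Ultrafilter I}
    (hD : ¬ UltrafilterComplete D (aleph 1)) :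
    ∃ s : ℕ → Set I, (∀ k, s k ∈ D) ∧ ⋂ k, s k = ∅ := by
  simp only [UltrafilterComplete, not_forall, exists_prop] at hD
  obtain ⟨G, hGD, hGcard, hG⟩ := hD
  have hGne : G.Nonempty :=
    Set.nonempty_iff_ne_empty.2 fun h => hG (by rw [h, Set.sInter_empty]; exact univ_mem)
  have hGcount : G.Countable := le_aleph0_iff_set_countable.1 (lt_aleph_one_iff.1 hGcard)
  obtain ⟨e, rfl⟩ := hGcount.exists_eq_range hGne
  refine ⟨fun k => e k ∩ (⋂₀ Set.range e)ᶜ, fun k => ?_, ?_⟩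
  · exact inter_mem (hGD _ ⟨k, rfl⟩) (Ultrafilter.compl_mem_iff_notMem.2 hG)
  · rw [← Set.iInter_inter, ← Set.sInter_range, Set.inter_compl_self]

theorem exists_tendsto_atTop_of_iInter_eq_empty {I : Type*} {l : Filter I} {s : ℕ → Set I}
    (hs : ∀ k, s k ∈ l) (hempty : ⋂ k, s k = ∅) : ∃ n : I → ℕ, Tendsto n l atTop := by
  classical
  have hexit : ∀ i, ∃ k, i ∉ s k := fun i => by
    simpa using Set.eq_empty_iff_forall_notMem.1 hempty i
  refine ⟨fun i => Nat.find (hexit i), tendsto_atTop.2 fun k => ?_⟩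
  filter_upwards [(eventually_all_finite (Set.finite_lt_nat k)).2 fun j _ => hs j] with i hi
  exact (Nat.le_find_iff _ _).2 fun j hj => not_not.2 (hi j hj)

theorem not_tendsto_comp_of_pairwise_one_le_norm_sub {E I : Type*} [SeminormedAddCommGroup E]
    {l : Filter I} [l.NeBot] {n : I → ℕ} (hn : Tendsto n l atTop) {y : ℕ → E}
    (hy : Pairwise fun m k => 1 ≤ ‖y m - y k‖) (x : E) : ¬ Tendsto (y ∘ n) l (𝓝 x) := by
  intro hx
  have hclose : ∀ᶠ i in l, dist (y (n i)) x < 1 / 2 := hx (Metric.ball_mem_nhds x (by norm_num))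
  obtain ⟨i₀, hi₀⟩ := hclose.exists
  obtain ⟨j, hj, hnj⟩ := (hclose.and (hn.eventually_gt_atTop (n i₀))).exists
  have hfar : 1 ≤ dist (y (n j)) (y (n i₀)) := dist_eq_norm (y (n j)) _ ▸ hy hnj.ne'
  linarith [dist_triangle_right (y (n j)) (y (n i₀)) x]

theorem diagEmbedding_eq_mk_iff {I : Type u} {D : Ultrafilter I} {X : Type u}
    [NormedAddCommGroup X] [NormedSpace ℝ X] (x : X) (f : lp (fun _ : I => X) ∞) :
    diagEmbedding I D X x = Submodule.Quotient.mk f ↔ Tendsto (fun i => f i) D (𝓝 x) := by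
  rw [diagEmbedding, Submodule.Quotient.eq, tendsto_iff_norm_sub_tendsto_zero]
  simp_rw [← norm_neg (f _ - x), neg_sub]
  rfl

theorem diagEmbedding_not_surjective_of_countably_incomplete_general
    (I : Type u) (D : Ultrafilter I)
    (X : Type u) [NormedAddCommGroup X] [NormedSpace ℝ X]
    (hinf : ¬ FiniteDimensional ℝ X)
    (hD : ¬ UltrafilterComplete D (Cardinal.aleph 1)) :
    ¬ Function.Surjective (diagEmbedding I D X) := by
  obtain ⟨s, hsD, hs⟩ := exists_seq_mem_iInter_eq_empty_of_not_ultrafilterComplete hD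
  obtain ⟨n, hn⟩ := exists_tendsto_atTop_of_iInter_eq_empty (l := D) hsD hs
  obtain ⟨R, y, -, hyR, hy⟩ := exists_seq_norm_le_one_le_norm_sub (𝕜 := ℝ) hinf
  let f : lp (fun _ : I => X) ∞ := ⟨y ∘ n, memℓp_infty ⟨R, by rintro _ ⟨i, rfl⟩; exact hyR _⟩⟩
  intro hsurj
  obtain ⟨x, hx⟩ := hsurj (Submodule.Quotient.mk f)
  exact not_tendsto_comp_of_pairwise_one_le_norm_sub hn hy x ((diagEmbedding_eq_mk_iff x f).1 hx)

/-- If `X` is an infinite-dimensional Banach space and `D` is a countably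
incomplete (not `ω₁`-complete) ultrafilter, then the canonical embedding `d_X : X → (X)_D`
is not surjective. -/
theorem diagEmbedding_not_surjective_of_countably_incomplete
    (I : Type u) (D : Ultrafilter I)
    (X : Type u) [NormedAddCommGroup X] [NormedSpace ℝ X] [CompleteSpace X]
    (hinf : ¬ FiniteDimensional ℝ X)
    (hD : ¬ UltrafilterComplete D (Cardinal.aleph 1)) :
    ¬ Function.Surjective (diagEmbedding I D X) :=
  diagEmbedding_not_surjective_of_countably_incomplete_general I D X hinf hD
end
end

section
/- Let X be a Banach space with dim X = κ ≥ ω, and let D be a τ-regular ultrafilter on a set I of cardinality τ. Then dim((X)_D) = κ^τ (cardinal exponentiation). -/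
/-!
A densely spanning set of size `κ` yields a dense set of size `κ` (its rational combinations),
and the families with values in it give a dense subset of `ℓ∞(I, X)`, hence of `(X)_D`, of size
`κ ^ τ`. Conversely, by Riesz's lemma a maximal `1/2`-separated set `S` of unit vectors spans `X`
densely, so `#S ≥ κ`. If `τ` is infinite, the regularity family `G` lets one code every
`f : G → S` into an element of `(X)_D` (Keisler), giving `κ ^ τ > ℵ₀` points that are pairwise
`1/2` apart, and a densely spanning set must be at least that large. If `τ` is finite, `D` is
principal, `(X)_D` maps onto `X`, and `κ ^ τ = κ`.
-/

open Filter Topology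
open scoped ENNReal

noncomputable section

universe u

/-- The dimension of a normed space: the least cardinality of a subset whose closed linear
span is the whole space (for infinite-dimensional spaces this is the density character). -/
noncomputable def bdim (X : Type u) [SeminormedAddCommGroup X] [NormedSpace ℝ X] :
    Cardinal.{u} :=
  sInf {c : Cardinal.{u} |
    ∃ A : Set X, Cardinal.mk A = c ∧ (Submodule.span ℝ A).topologicalClosure = ⊤}

/-- An ultrafilter `D` on `I` is `τ`-regular if some `G ⊆ D` of cardinality `τ` is such that
every `i ∈ I` belongs to only finitely many members of `G`. -/
def UltrafilterRegular {I : Type u} (D : Ultrafilter I) (τ : Cardinal.{u}) : Prop :=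
  ∃ G : Set (Set I), (∀ g ∈ G, g ∈ D) ∧ Cardinal.mk G = τ ∧
    ∀ i : I, {e ∈ G | i ∈ e}.Finite


open Cardinal

section Bdim

variable {Y : Type u} [SeminormedAddCommGroup Y] [NormedSpace ℝ Y]

lemma bdim_le_mk {A : Set Y} (hA : (Submodule.span ℝ A).topologicalClosure = ⊤) :
    bdim Y ≤ #A :=
  csInf_le' ⟨A, rfl, hA⟩

lemma bdim_le_mk_of_dense {R : Set Y} (hR : Dense R) : bdim Y ≤ #R :=
  bdim_le_mk <| Submodule.dense_iff_topologicalClosure_eq_top.1 <|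
    hR.mono Submodule.subset_span

lemma exists_mk_eq_bdim :
    ∃ A : Set Y, #A = bdim Y ∧ (Submodule.span ℝ A).topologicalClosure = ⊤ :=
  csInf_mem (s := {c | ∃ A : Set Y, #A = c ∧ (Submodule.span ℝ A).topologicalClosure = ⊤})
    ⟨_, Set.univ, rfl, by
      simp only [Submodule.span_univ]
      exact eq_top_iff.2 (Submodule.le_topologicalClosure _)⟩

def ratSpan (A : Set Y) : Set Y :=
  Set.range fun l : List (ℚ × A) => (l.map fun p => (p.1 : ℝ) • (p.2 : Y)).sum

lemma mk_ratSpan_le (A : Set Y) : #(ratSpan A) ≤ max ℵ₀ #A := by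
  refine mk_range_le.trans <| (mk_list_le_max _).trans <| max_le (le_max_left _ _) ?_
  rw [mk_prod, lift_uzero, mk_eq_aleph0 ℚ, lift_aleph0]
  exact mul_le_max_of_aleph0_le_left le_rfl

lemma subset_ratSpan (A : Set Y) : A ⊆ ratSpan A :=
  fun a ha => ⟨[(1, ⟨a, ha⟩)], by simp⟩

lemma add_mem_ratSpan {A : Set Y} {x y : Y} (hx : x ∈ ratSpan A) (hy : y ∈ ratSpan A) :
    x + y ∈ ratSpan A := by
  obtain ⟨l, rfl⟩ := hx
  obtain ⟨m, rfl⟩ := hy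
  exact ⟨l ++ m, by simp⟩

lemma ratCast_smul_mem_ratSpan {A : Set Y} (q : ℚ) {x : Y} (hx : x ∈ ratSpan A) :
    (q : ℝ) • x ∈ ratSpan A := by
  obtain ⟨l, rfl⟩ := hx
  refine ⟨l.map fun p => (q * p.1, p.2), ?_⟩
  simp [Function.comp_def, List.smul_sum, mul_smul]

def closureRatSpan (A : Set Y) : Submodule ℝ Y where
  carrier := closure (ratSpan A)
  zero_mem' := subset_closure ⟨[], rfl⟩
  add_mem' hx hy := map_mem_closure₂ continuous_add hx hy fun _ ha _ hb => add_mem_ratSpan ha hb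
  smul_mem' c x hx := by
    have hclosed : IsClosed {c : ℝ | c • x ∈ closure (ratSpan A)} :=
      isClosed_closure.preimage (continuous_id.smul continuous_const)
    have hrat : Set.range ((↑) : ℚ → ℝ) ⊆ {c : ℝ | c • x ∈ closure (ratSpan A)} := by
      rintro _ ⟨q, rfl⟩
      exact map_mem_closure (continuous_const_smul _) hx fun _ => ratCast_smul_mem_ratSpan q
    exact hclosed.closure_subset_iff.2 hrat
      ((Rat.denseRange_cast (𝕜 := ℝ)).closure_range ▸ Set.mem_univ c)

lemma dense_ratSpan {A : Set Y} (hA : (Submodule.span ℝ A).topologicalClosure = ⊤) :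
    Dense (ratSpan A) := by
  have hspan : Submodule.span ℝ A ≤ closureRatSpan A :=
    Submodule.span_le.2 <| (subset_ratSpan A).trans subset_closure
  exact dense_closure.1 <| (Submodule.dense_iff_topologicalClosure_eq_top.2 hA).mono hspan

lemma exists_dense_mk_le_bdim : ∃ R : Set Y, Dense R ∧ #R ≤ max ℵ₀ (bdim Y) := by
  obtain ⟨A, hA, hspan⟩ := exists_mk_eq_bdim (Y := Y)
  exact ⟨ratSpan A, dense_ratSpan hspan, hA ▸ mk_ratSpan_le A⟩

/-- Each point of a `δ`-separated family has its own point of a dense set within `δ / 2`. -/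
lemma mk_le_max_bdim_of_separated {ι : Type u} {v : ι → Y} {δ : ℝ} (hδ : 0 < δ)
    (hv : Pairwise fun i j => δ ≤ dist (v i) (v j)) : #ι ≤ max ℵ₀ (bdim Y) := by
  obtain ⟨R, hR, hRcard⟩ := exists_dense_mk_le_bdim (Y := Y)
  have hnear (i : ι) : ∃ r : R, dist (v i) r < δ / 2 := by
    obtain ⟨r, hr, hdist⟩ := Metric.dense_iff.1 hR (v i) (δ / 2) (half_pos hδ)
    exact ⟨⟨r, hdist⟩, by simpa [dist_comm] using hr⟩
  choose F hF using hnear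
  refine (mk_le_of_injective (f := F) fun i j hij => by_contra fun hne => ?_).trans hRcard
  linarith [hv hne, hF i, hij ▸ hF j, dist_triangle_right (v i) (v j) (F i)]

variable {Z : Type u} [SeminormedAddCommGroup Z] [NormedSpace ℝ Z]

lemma bdim_le_of_denseRange (φ : Y →L[ℝ] Z) (hφ : DenseRange φ) : bdim Z ≤ bdim Y := by
  obtain ⟨A, hA, hspan⟩ := exists_mk_eq_bdim (Y := Y)
  have hdense : Dense (φ '' Submodule.span ℝ A) :=
    hφ.dense_image φ.continuous (Submodule.dense_iff_topologicalClosure_eq_top.2 hspan)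
  rw [← ContinuousLinearMap.coe_coe φ, ← Submodule.map_coe, ← Submodule.span_image] at hdense
  exact (bdim_le_mk (Submodule.dense_iff_topologicalClosure_eq_top.1 hdense)).trans
    (hA ▸ mk_image_le)

end Bdim

lemma exists_separated_sphere_bdim_le (X : Type u) [NormedAddCommGroup X] [NormedSpace ℝ X] :
    ∃ S ⊆ Metric.sphere (0 : X) 1, S.Pairwise (fun a b => 1 / 2 ≤ dist a b) ∧ bdim X ≤ #S := by
  obtain ⟨S, ⟨hS1, hSsep⟩, hSmax⟩ := zorn_subset
    {S : Set X | S ⊆ Metric.sphere 0 1 ∧ S.Pairwise fun a b => 1 / 2 ≤ dist a b}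
    fun c hc hchain => ⟨⋃₀ c, ⟨Set.sUnion_subset fun s hs => (hc hs).1,
      (Set.pairwise_sUnion hchain.directedOn).2 fun s hs => (hc hs).2⟩,
      fun _ => Set.subset_sUnion_of_mem⟩
  refine ⟨S, hS1, hSsep, bdim_le_mk ?_⟩
  by_contra hne
  set F := (Submodule.span ℝ S).topologicalClosure
  obtain ⟨x, hxF, hx1, hfar⟩ := riesz_lemma_of_lt_one (𝕜 := ℝ) (F := F)
    (Submodule.isClosed_topologicalClosure _) (SetLike.exists_not_mem_of_ne_top F hne)
    (by norm_num : (1 / 2 : ℝ) < 1)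
  have hxS : x ∉ S := fun h => hxF (Submodule.le_topologicalClosure _ (Submodule.subset_span h))
  have hfarS (s : X) (hs : s ∈ S) : 1 / 2 ≤ dist x s := by
    rw [dist_eq_norm]
    exact hfar s (Submodule.le_topologicalClosure _ (Submodule.subset_span hs))
  refine hxS (hSmax ⟨Set.insert_subset (by simpa using hx1) hS1, hSsep.insert fun s hs _ => ?_⟩
    (Set.subset_insert x S) (Set.mem_insert x S))
  exact ⟨hfarS s hs, by rw [dist_comm]; exact hfarS s hs⟩

lemma dense_setOf_forall_mem {I X : Type*} [NormedAddCommGroup X] {R : Set X} (hR : Dense R) :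
    Dense {f : lp (fun _ : I => X) ∞ | ∀ i, f i ∈ R} := by
  refine Metric.dense_iff.2 fun f ε hε => ?_
  have hnear (i : I) : ∃ r ∈ R, ‖f i - r‖ < ε / 2 := by
    obtain ⟨r, hr, hrR⟩ := Metric.dense_iff.1 hR (f i) (ε / 2) (half_pos hε)
    exact ⟨r, hrR, by simpa [dist_eq_norm, norm_sub_rev] using hr⟩
  choose r hrR hr using hnear
  have hd : Memℓp (fun i => f i - r i) ∞ :=
    memℓp_infty ⟨ε / 2, by rintro _ ⟨i, rfl⟩; exact (hr i).le⟩
  have hfr : Memℓp r ∞ := by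
    convert (lp.memℓp f).sub hd using 1
    ext i
    simp
  refine ⟨⟨r, hfr⟩, ?_, hrR⟩
  rw [Metric.mem_ball, dist_comm, dist_eq_norm]
  exact (lp.norm_le_of_forall_le (half_pos hε).le fun i => (hr i).le).trans_lt (half_lt_self hε)

section Ultrapower

variable {I : Type u} {X : Type u} [NormedAddCommGroup X] [NormedSpace ℝ X]

lemma bdim_lp_infty_le : bdim (lp (fun _ : I => X) ∞) ≤ max ℵ₀ (bdim X) ^ #I := by
  obtain ⟨R, hR, hRcard⟩ := exists_dense_mk_le_bdim (Y := X)
  refine (bdim_le_mk_of_dense (dense_setOf_forall_mem (I := I) hR)).trans ?_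
  refine (mk_le_of_injective (f := fun f i => (⟨f.1 i, f.2 i⟩ : R)) fun f g hfg => ?_).trans ?_
  · exact Subtype.ext <| lp.ext <| funext fun i => congrArg Subtype.val (congrFun hfg i)
  · rw [← power_def]
    exact power_le_power_right hRcard

variable (D : Ultrafilter I)

lemma bdim_ultrapower_le : bdim (Ultrapower I D X) ≤ max ℵ₀ (bdim X) ^ #I :=
  (bdim_le_of_denseRange (ultraNullIdeal I D X).mkQL
    (Submodule.mkQ_surjective _).denseRange).trans bdim_lp_infty_le

lemma le_norm_mk_of_eventually_le {w : lp (fun _ : I => X) ∞} {δ : ℝ}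
    (hw : ∀ᶠ i in (D : Filter I), δ ≤ ‖w i‖) :
    δ ≤ ‖(Submodule.Quotient.mk w : Ultrapower I D X)‖ := by
  refine QuotientAddGroup.le_norm_iff.2 fun m hm => le_of_forall_pos_lt_add fun ε hε => ?_
  have hmw : m - w ∈ ultraNullIdeal I D X := (Submodule.Quotient.eq _).1 hm
  obtain ⟨i, hδi, hεi⟩ := (hw.and ((hmw : Tendsto _ _ _).eventually (gt_mem_nhds hε))).exists
  have hmi := lp.norm_apply_le_norm ENNReal.top_ne_zero m i
  rw [lp.coeFn_sub, Pi.sub_apply, norm_sub_rev] at hεi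
  linarith [norm_le_norm_add_norm_sub' (w i) (m i)]

lemma bdim_le_bdim_ultrapower_of_finite [Finite I] : bdim X ≤ bdim (Ultrapower I D X) := by
  obtain ⟨i₀, rfl⟩ := D.eq_pure_of_finite
  have hle (f : lp (fun _ : I => X) ∞) :
      ‖f i₀‖ ≤ ‖(Submodule.Quotient.mk f : Ultrapower I (pure i₀) X)‖ :=
    le_norm_mk_of_eventually_le _ (Filter.eventually_pure.2 le_rfl)
  let ev := (ultraNullIdeal I (pure i₀) X).liftQ (lp.evalₗ (𝕜 := ℝ) (fun _ : I => X) ∞ i₀)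
    fun f hf => by simpa [(Submodule.Quotient.mk_eq_zero _).2 hf] using hle f
  refine bdim_le_of_denseRange (ev.mkContinuous 1 fun a => ?_) ?_
  · obtain ⟨f, rfl⟩ := Submodule.mkQ_surjective _ a
    simpa [ev] using hle f
  · exact Function.Surjective.denseRange fun x => ⟨Submodule.Quotient.mk (constLp I X x), rfl⟩

/-- The value of `w f` at `i` codes the restriction of `f` to the finite set `{j | i ∈ g j}`, so
`w f` and `w f'` are `δ`-apart on the set `g j ∈ D` for any `j` with `f j ≠ f' j`. -/
lemma exists_separated_ultrapower {S J : Type u} [Infinite S] (v : S → X) {C δ : ℝ}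
    (hvC : ∀ s, ‖v s‖ ≤ C) (hv : Pairwise fun s t => δ ≤ dist (v s) (v t))
    (g : J → Set I) (hgD : ∀ j, g j ∈ D) (hgfin : ∀ i, {j | i ∈ g j}.Finite) :
    ∃ w : (J → S) → Ultrapower I D X, Pairwise fun f f' => δ ≤ dist (w f) (w f') := by
  have hcode (i : I) : Nonempty (({j | i ∈ g j} → S) ↪ S) := by
    have := (hgfin i).to_subtype
    rw [← Cardinal.le_def, ← power_def]
    exact pow_le (aleph0_le_mk S) (lt_aleph0_of_finite _)
  let code i := (hcode i).some
  let y (f : J → S) : lp (fun _ : I => X) ∞ :=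
    ⟨fun i => v (code i fun j => f j), memℓp_infty ⟨C, by rintro _ ⟨i, rfl⟩; exact hvC _⟩⟩
  refine ⟨fun f => Submodule.Quotient.mk (y f), fun f f' hne => ?_⟩
  obtain ⟨j, hj⟩ := Function.ne_iff.1 hne
  rw [dist_eq_norm, ← Submodule.Quotient.mk_sub]
  refine le_norm_mk_of_eventually_le D (Filter.mem_of_superset (hgD j) fun i hi => ?_)
  have hcodes : code i (fun k => f k) ≠ code i (fun k => f' k) :=
    (code i).injective.ne fun h => hj (congrFun h ⟨j, hi⟩)
  exact (hv hcodes).trans_eq (dist_eq_norm _ _)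

lemma bdim_pow_le_bdim_ultrapower (hX : ℵ₀ ≤ bdim X) {J : Type u} (g : J → Set I)
    (hgD : ∀ j, g j ∈ D) (hgfin : ∀ i, {j | i ∈ g j}.Finite) (hJ : ℵ₀ ≤ #J) :
    bdim X ^ #J ≤ bdim (Ultrapower I D X) := by
  obtain ⟨S, hS1, hSsep, hXS⟩ := exists_separated_sphere_bdim_le X
  have : Infinite S := infinite_iff.2 (hX.trans hXS)
  obtain ⟨w, hw⟩ := exists_separated_ultrapower D ((↑) : S → X) (C := 1)
    (fun s => (mem_sphere_zero_iff_norm.1 (hS1 s.2)).le)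
    (fun s t hst => hSsep s.2 t.2 (Subtype.val_injective.ne hst)) g hgD hgfin
  have hsep : #S ^ #J ≤ max ℵ₀ (bdim (Ultrapower I D X)) :=
    power_def S J ▸ mk_le_max_bdim_of_separated (by norm_num) hw
  have hℵ₀ : ℵ₀ < bdim X ^ #J := hJ.trans_lt <| (cantor _).trans_le <|
    power_le_power_right ((natCast_lt_aleph0 (n := 2)).le.trans hX)
  exact (le_max_iff.1 ((power_le_power_right hXS).trans hsep)).resolve_left hℵ₀.not_ge

end Ultrapower

theorem bdim_ultrapower_of_regular_general
    (I : Type u) (D : Ultrafilter I)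
    (X : Type u) [NormedAddCommGroup X] [NormedSpace ℝ X]
    (κ τ : Cardinal.{u}) (hκ : Cardinal.aleph0 ≤ κ) (hX : bdim X = κ)
    (hI : Cardinal.mk I = τ) (hreg : UltrafilterRegular D τ) :
    bdim (Ultrapower I D X) = κ ^ τ := by
  refine le_antisymm (by simpa [hX, hI, max_eq_right hκ] using bdim_ultrapower_le (X := X) D) ?_
  rcases lt_or_ge τ ℵ₀ with hτ | hτ
  · have : Finite I := lt_aleph0_iff_finite.1 (hI ▸ hτ)
    have : Nonempty I := Filter.nonempty_of_neBot (D : Filter I)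
    obtain ⟨n, rfl⟩ := lt_aleph0.1 hτ
    have hn : 1 ≤ n := by
      have := Cardinal.one_le_iff_ne_zero.2 (mk_ne_zero I)
      rwa [hI, Nat.one_le_cast] at this
    rw [power_natCast, power_nat_eq hκ hn, ← hX]
    exact bdim_le_bdim_ultrapower_of_finite D
  · obtain ⟨G, hGD, hGcard, hGfin⟩ := hreg
    have hfin (i : I) : {g : G | i ∈ (g : Set I)}.Finite :=
      ((hGfin i).preimage Subtype.val_injective.injOn).subset fun g hg => ⟨g.2, hg⟩
    have := bdim_pow_le_bdim_ultrapower D (hX ▸ hκ) ((↑) : G → Set I) (fun g => hGD g g.2) hfin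
      (hGcard ▸ hτ)
    rwa [hX, hGcard] at this

/-- If `dim X = κ ≥ ω` and `D` is a `τ`-regular ultrafilter on a set `I`
of cardinality `τ`, then `dim (X)_D = κ ^ τ` (cardinal exponentiation). -/
theorem bdim_ultrapower_of_regular
    (I : Type u) (D : Ultrafilter I)
    (X : Type u) [NormedAddCommGroup X] [NormedSpace ℝ X] [CompleteSpace X]
    (κ τ : Cardinal.{u}) (hκ : Cardinal.aleph0 ≤ κ) (hX : bdim X = κ)
    (hI : Cardinal.mk I = τ) (hreg : UltrafilterRegular D τ) :
    bdim (Ultrapower I D X) = κ ^ τ :=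
  bdim_ultrapower_of_regular_general I D X κ τ hκ hX hI hreg
end
end

section
/- For every infinite-dimensional real Banach space X and every n < ω, the set H_n(X) of isometry classes of n-dimensional subspaces of X is a connected subset of the Minkowski compact 𝔐_n. -/
noncomputable section

universe u

/-- A packaged real Banach space. -/
structure BanachSpace : Type (u + 1) where
  carrier : Type u
  [norm : NormedAddCommGroup carrier]
  [smulR : NormedSpace ℝ carrier]
  [complete : CompleteSpace carrier]

attribute [instance] BanachSpace.norm BanachSpace.smulR BanachSpace.complete

/-- A norm on `ℝ^n`. An `n`-dimensional real Banach space is (isometric to) `ℝ^n`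
equipped with such a norm. -/
structure MNorm (n : ℕ) : Type where
  toFun : (Fin n → ℝ) → ℝ
  add_le' : ∀ x y, toFun (x + y) ≤ toFun x + toFun y
  smul_eq' : ∀ (a : ℝ) (x), toFun (a • x) = |a| * toFun x
  eq_zero' : ∀ x, toFun x = 0 → x = 0

/-- Two norms on `ℝ^n` are identified when they are linearly isometrically equivalent. -/
def mnormSetoid (n : ℕ) : Setoid (MNorm n) where
  r N₁ N₂ := ∃ e : (Fin n → ℝ) ≃ₗ[ℝ] (Fin n → ℝ), ∀ x, N₂.toFun (e x) = N₁.toFun x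
  iseqv := by
    constructor
    · exact fun N => ⟨LinearEquiv.refl ℝ _, fun x => rfl⟩
    · rintro N₁ N₂ ⟨e, he⟩
      refine ⟨e.symm, fun x => ?_⟩
      have h := he (e.symm x)
      rw [e.apply_symm_apply] at h
      exact h.symm
    · rintro N₁ N₂ N₃ ⟨e, he⟩ ⟨f, hf⟩
      exact ⟨e.trans f, fun x => by
        rw [LinearEquiv.trans_apply, hf, he]⟩

/-- The Minkowski compact `𝔐_n`: isometry classes of `n`-dimensional real Banach spaces. -/
def Mink (n : ℕ) : Type := Quotient (mnormSetoid n)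

/-- The Minkowski space `𝔐`: the disjoint union of the `𝔐_n`. -/
def MinkSpace : Type := Σ n : ℕ, Mink n

/-- The operator norm of a linear map `u : (ℝ^n, N₁) → (ℝ^n, N₂)`. -/
noncomputable def opC (n : ℕ) (N₁ N₂ : MNorm n)
    (u : (Fin n → ℝ) →ₗ[ℝ] (Fin n → ℝ)) : ℝ :=
  sInf {C : ℝ | 0 ≤ C ∧ ∀ x, N₂.toFun (u x) ≤ C * N₁.toFun x}

/-- The multiplicative Banach–Mazur distance between two norms on `ℝ^n`:
`inf {‖u‖·‖u⁻¹‖ : u a linear isomorphism}`. -/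
noncomputable def mDist (n : ℕ) (N₁ N₂ : MNorm n) : ℝ :=
  sInf {c : ℝ | ∃ u : (Fin n → ℝ) ≃ₗ[ℝ] (Fin n → ℝ),
    c = opC n N₁ N₂ u.toLinearMap * opC n N₂ N₁ u.symm.toLinearMap}

/-- The Banach–Mazur metric `log d` on `𝔐_n`. -/
noncomputable def minkDist (n : ℕ) (P Q : Mink n) : ℝ :=
  Real.log (mDist n P.out Q.out)

/-- The topology of the Banach–Mazur metric on `𝔐_n` (generated by its open balls). -/
instance minkTopology (n : ℕ) : TopologicalSpace (Mink n) :=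
  TopologicalSpace.generateFrom
    {s : Set (Mink n) | ∃ (P : Mink n) (ε : ℝ), 0 < ε ∧ s = {Q | minkDist n P Q < ε}}

instance : TopologicalSpace MinkSpace := by
  unfold MinkSpace; infer_instance

/-- The class in `𝔐` determined by a norm on `ℝ^n`. -/
def minkClass {n : ℕ} (N : MNorm n) : MinkSpace := ⟨n, Quotient.mk (mnormSetoid n) N⟩

/-- `H(X) ⊆ 𝔐`: the set of isometry classes of finite-dimensional subspaces of `X`.
A class `c` belongs to `H(X)` iff `ℝ^{c.1}` with (a representative of) the norm class `c.2`
embeds linearly isometrically into `X`. -/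
def HSet (X : Type u) [SeminormedAddCommGroup X] [NormedSpace ℝ X] : Set MinkSpace :=
  {c : MinkSpace | ∃ f : (Fin c.1 → ℝ) →ₗ[ℝ] X, Function.Injective f ∧
    ∀ v, ‖f v‖ = (Quotient.out c.2).toFun v}

/-- `H_m(X) ⊆ 𝔐_m`: the set of isometry classes of `m`-dimensional subspaces of `X`. -/
def HmSet (m : ℕ) (X : Type u) [SeminormedAddCommGroup X] [NormedSpace ℝ X] : Set (Mink m) :=
  {P : Mink m | ∃ f : (Fin m → ℝ) →ₗ[ℝ] X, Function.Injective f ∧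
    ∀ v, ‖f v‖ = (Quotient.out P).toFun v}

/-!
Given `n`-dimensional subspaces `f(ℝⁿ)` and `g(ℝⁿ)` of `X`, infinite dimensionality provides a
third embedding `h` whose image meets `f(ℝⁿ) + g(ℝⁿ)` only in `0`. Then every map
`f + t • (h - f)` on the line from `f` to `h` is injective, so it induces a norm on `ℝⁿ` whose
class lies in `H_n(X)`. These norms move continuously in the Banach–Mazur distance: by
equivalence of norms in finite dimension, `‖(h - f) x‖ ≤ K ‖(f + t₀ • (h - f)) x‖`, so the norm
at `t` is within a factor `1 ± |t - t₀| K` of the norm at `t₀`. Hence every class in `H_n(X)` is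
joined to the class of `h`, and `H_n(X)` is path connected (for `n = 0`, `𝔐_0` is a point).
-/

open Function Filter Topology

theorem exists_injective_linearMap_of_not_finiteDimensional {K V : Type*} [Field K]
    [AddCommGroup V] [Module K V] (hV : ¬ FiniteDimensional K V) (n : ℕ) :
    ∃ g : (Fin n → K) →ₗ[K] V, Injective g := by
  let b := Module.Basis.ofVectorSpace K V
  have : Infinite (Module.Basis.ofVectorSpaceIndex K V) := by
    rw [← not_finite_iff_infinite]
    exact fun _ => hV (Module.Finite.of_basis b)
  let e : Fin n ↪ Module.Basis.ofVectorSpaceIndex K V :=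
    Fin.valEmbedding.trans (Infinite.natEmbedding _)
  exact ⟨_, (b.linearIndependent.comp e e.injective).fintypeLinearCombination_injective⟩

theorem exists_injective_mkQ_comp {K V : Type*} [Field K] [AddCommGroup V] [Module K V]
    (hV : ¬ FiniteDimensional K V) (W : Submodule K V) [FiniteDimensional K W] (n : ℕ) :
    ∃ h : (Fin n → K) →ₗ[K] V, Injective (W.mkQ ∘ h) := by
  have hQ : ¬ FiniteDimensional K (V ⧸ W) := fun _ => hV (Module.Finite.of_submodule_quotient W)
  obtain ⟨g, hg⟩ := exists_injective_linearMap_of_not_finiteDimensional hQ n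
  obtain ⟨h, rfl⟩ := Module.projective_lifting_property W.mkQ g W.mkQ_surjective
  exact ⟨h, hg⟩

theorem injective_add_smul_sub_of_injective_mkQ_comp {K V E : Type*} [Field K]
    [AddCommGroup V] [Module K V] [AddCommGroup E] [Module K E] {W : Submodule K V}
    {f h : E →ₗ[K] V} (hf : Injective f) (hfW : LinearMap.range f ≤ W)
    (hh : Injective (W.mkQ ∘ h)) (t : K) : Injective (f + t • (h - f)) := by
  rw [← LinearMap.ker_eq_bot, LinearMap.ker_eq_bot']
  intro c hc
  rcases eq_or_ne t 0 with rfl | ht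
  · exact hf (by simpa using hc)
  · have hfc : W.mkQ (f c) = 0 := (Submodule.Quotient.mk_eq_zero W).2 (hfW ⟨c, rfl⟩)
    have := congrArg W.mkQ hc
    simp only [LinearMap.add_apply, LinearMap.smul_apply, LinearMap.sub_apply, map_add,
      map_smul, map_sub, hfc, sub_zero, zero_add, map_zero, smul_eq_zero, ht, false_or] at this
    exact hh (by simpa using this)

theorem LinearMap.exists_norm_le_mul_norm_of_injective {𝕜 E F G : Type*}
    [NontriviallyNormedField 𝕜] [CompleteSpace 𝕜] [AddCommGroup E] [Module 𝕜 E]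
    [FiniteDimensional 𝕜 E] [NormedAddCommGroup F] [NormedSpace 𝕜 F]
    [SeminormedAddCommGroup G] [NormedSpace 𝕜 G] {f : E →ₗ[𝕜] F} (hf : Injective f)
    (g : E →ₗ[𝕜] G) : ∃ K, 0 ≤ K ∧ ∀ x, ‖g x‖ ≤ K * ‖f x‖ := by
  let e := LinearEquiv.ofInjective f hf
  let g' := (g ∘ₗ e.symm.toLinearMap).toContinuousLinearMap
  refine ⟨‖g'‖, norm_nonneg _, fun x => ?_⟩
  calc ‖g x‖ = ‖g' (e x)‖ := by simp [g']
    _ ≤ ‖g'‖ * ‖f x‖ := g'.le_opNorm (e x)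

namespace MNorm

variable {n : ℕ}

theorem ext {N₁ N₂ : MNorm n} (h : ∀ x, N₁.toFun x = N₂.toFun x) : N₁ = N₂ := by
  cases N₁; cases N₂; congr; exact funext h

theorem map_zero (N : MNorm n) : N.toFun 0 = 0 := by
  simpa using N.smul_eq' 0 0

theorem map_neg (N : MNorm n) (x : Fin n → ℝ) : N.toFun (-x) = N.toFun x := by
  simpa using N.smul_eq' (-1) x

theorem nonneg (N : MNorm n) (x : Fin n → ℝ) : 0 ≤ N.toFun x := by
  have := N.add_le' x (-x)
  rw [add_neg_cancel, map_zero, map_neg] at this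
  linarith

theorem pos (N : MNorm n) {x : Fin n → ℝ} (hx : x ≠ 0) : 0 < N.toFun x :=
  (N.nonneg x).lt_of_ne' fun h => hx (N.eq_zero' x h)

/-- `ℝ^n` normed by `N`: a type synonym, since `Fin n → ℝ` already carries the sup norm. -/
def Space (_ : MNorm n) : Type := Fin n → ℝ

instance (N : MNorm n) : AddCommGroup N.Space := inferInstanceAs (AddCommGroup (Fin n → ℝ))

instance (N : MNorm n) : Module ℝ N.Space := inferInstanceAs (Module ℝ (Fin n → ℝ))

instance (N : MNorm n) : NormedAddCommGroup N.Space :=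
  AddGroupNorm.toNormedAddCommGroup
    { toFun := N.toFun
      map_zero' := N.map_zero
      add_le' := N.add_le'
      neg' := N.map_neg
      eq_zero_of_map_eq_zero' := N.eq_zero' }

instance (N : MNorm n) : NormedSpace ℝ N.Space where
  norm_smul_le a x := (N.smul_eq' a x).le

instance (N : MNorm n) : FiniteDimensional ℝ N.Space :=
  inferInstanceAs (FiniteDimensional ℝ (Fin n → ℝ))

def toSpace (N : MNorm n) : (Fin n → ℝ) →ₗ[ℝ] N.Space := LinearMap.id

theorem exists_le_mul (N₁ N₂ : MNorm n) (u : (Fin n → ℝ) →ₗ[ℝ] (Fin n → ℝ)) :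
    ∃ C, 0 ≤ C ∧ ∀ x, N₂.toFun (u x) ≤ C * N₁.toFun x :=
  LinearMap.exists_norm_le_mul_norm_of_injective (f := N₁.toSpace) injective_id (N₂.toSpace ∘ₗ u)

def ofEmbedding {X : Type*} [NormedAddCommGroup X] [NormedSpace ℝ X]
    (f : (Fin n → ℝ) →ₗ[ℝ] X) (hf : Injective f) : MNorm n where
  toFun x := ‖f x‖
  add_le' x y := by simpa only [map_add] using norm_add_le (f x) (f y)
  smul_eq' a x := by rw [map_smul, norm_smul, Real.norm_eq_abs]
  eq_zero' x h := hf (by rw [norm_eq_zero.1 h, LinearMap.map_zero])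

end MNorm

section BanachMazur

variable {n : ℕ} {N₁ N₂ N₃ : MNorm n}

theorem opC_nonneg {u : (Fin n → ℝ) →ₗ[ℝ] (Fin n → ℝ)} : 0 ≤ opC n N₁ N₂ u :=
  Real.sInf_nonneg fun _ hC => hC.1

theorem opC_le {u : (Fin n → ℝ) →ₗ[ℝ] (Fin n → ℝ)} {C : ℝ} (hC₀ : 0 ≤ C)
    (hC : ∀ x, N₂.toFun (u x) ≤ C * N₁.toFun x) : opC n N₁ N₂ u ≤ C :=
  csInf_le ⟨0, fun _ h => h.1⟩ ⟨hC₀, hC⟩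

theorem le_opC_mul (u : (Fin n → ℝ) →ₗ[ℝ] (Fin n → ℝ)) (x : Fin n → ℝ) :
    N₂.toFun (u x) ≤ opC n N₁ N₂ u * N₁.toFun x := by
  rcases eq_or_ne x 0 with rfl | hx
  · simp [MNorm.map_zero]
  have hx := N₁.pos hx
  rw [← div_le_iff₀ hx]
  obtain ⟨C, hC₀, hC⟩ := N₁.exists_le_mul N₂ u
  exact le_csInf ⟨C, hC₀, hC⟩ fun C hC => (div_le_iff₀ hx).2 (hC.2 x)

theorem opC_comp_le (u v : (Fin n → ℝ) →ₗ[ℝ] (Fin n → ℝ)) :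
    opC n N₁ N₃ (v ∘ₗ u) ≤ opC n N₂ N₃ v * opC n N₁ N₂ u := by
  refine opC_le (mul_nonneg opC_nonneg opC_nonneg) fun x => ?_
  calc N₃.toFun (v (u x)) ≤ opC n N₂ N₃ v * N₂.toFun (u x) := le_opC_mul v (u x)
    _ ≤ opC n N₂ N₃ v * (opC n N₁ N₂ u * N₁.toFun x) :=
      mul_le_mul_of_nonneg_left (le_opC_mul u x) opC_nonneg
    _ = _ := (mul_assoc _ _ _).symm

theorem mDist_eq_iInf (N₁ N₂ : MNorm n) :
    mDist n N₁ N₂ = ⨅ u : (Fin n → ℝ) ≃ₗ[ℝ] (Fin n → ℝ),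
      opC n N₁ N₂ u.toLinearMap * opC n N₂ N₁ u.symm.toLinearMap := by
  rw [mDist, iInf]
  congr 1
  ext c
  exact exists_congr fun _ => eq_comm

theorem mDist_le (u : (Fin n → ℝ) ≃ₗ[ℝ] (Fin n → ℝ)) :
    mDist n N₁ N₂ ≤ opC n N₁ N₂ u.toLinearMap * opC n N₂ N₁ u.symm.toLinearMap := by
  rw [mDist_eq_iInf]
  exact ciInf_le ⟨0, Set.forall_mem_range.2 fun _ => mul_nonneg opC_nonneg opC_nonneg⟩ u

theorem mDist_nonneg : 0 ≤ mDist n N₁ N₂ :=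
  Real.sInf_nonneg fun _ ⟨_, hc⟩ => hc ▸ mul_nonneg opC_nonneg opC_nonneg

theorem one_le_mDist (hn : 0 < n) : 1 ≤ mDist n N₁ N₂ := by
  rw [mDist_eq_iInf]
  refine le_ciInf fun u => ?_
  obtain ⟨x, hx⟩ : ∃ x : Fin n → ℝ, x ≠ 0 := ⟨Pi.single ⟨0, hn⟩ 1, by simp⟩
  have hx := N₁.pos hx
  refine le_of_mul_le_mul_right ?_ hx
  calc 1 * N₁.toFun x = N₁.toFun (u.symm (u x)) := by simp
    _ ≤ opC n N₂ N₁ u.symm.toLinearMap * N₂.toFun (u x) := le_opC_mul _ (u x)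
    _ ≤ opC n N₂ N₁ u.symm.toLinearMap * (opC n N₁ N₂ u.toLinearMap * N₁.toFun x) :=
      mul_le_mul_of_nonneg_left (le_opC_mul _ x) opC_nonneg
    _ = _ := by ring

theorem mDist_triangle : mDist n N₁ N₃ ≤ mDist n N₁ N₂ * mDist n N₂ N₃ := by
  rw [mDist_eq_iInf N₁ N₂, mDist_eq_iInf N₂ N₃,
    Real.iInf_mul_of_nonneg (by rw [← mDist_eq_iInf]; exact mDist_nonneg)]
  refine le_ciInf fun u => ?_
  rw [Real.mul_iInf_of_nonneg (mul_nonneg opC_nonneg opC_nonneg)]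
  refine le_ciInf fun v => (mDist_le (u.trans v)).trans ?_
  calc opC n N₁ N₃ (v.toLinearMap ∘ₗ u.toLinearMap) *
        opC n N₃ N₁ (u.symm.toLinearMap ∘ₗ v.symm.toLinearMap)
      ≤ (opC n N₂ N₃ v.toLinearMap * opC n N₁ N₂ u.toLinearMap) *
        (opC n N₂ N₁ u.symm.toLinearMap * opC n N₃ N₂ v.symm.toLinearMap) :=
      mul_le_mul (opC_comp_le _ _) (opC_comp_le _ _) opC_nonneg
        (mul_nonneg opC_nonneg opC_nonneg)
    _ = _ := by ring

theorem mDist_le_mul_of_le_mul {a b : ℝ} (ha : 0 ≤ a) (hb : 0 ≤ b)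
    (h₁₂ : ∀ x, N₂.toFun x ≤ a * N₁.toFun x) (h₂₁ : ∀ x, N₁.toFun x ≤ b * N₂.toFun x) :
    mDist n N₁ N₂ ≤ a * b :=
  (mDist_le (LinearEquiv.refl ℝ _)).trans (mul_le_mul (opC_le ha h₁₂) (opC_le hb h₂₁)
    opC_nonneg ha)

theorem mDist_le_one_of_rel (h : mnormSetoid n N₁ N₂) : mDist n N₁ N₂ ≤ 1 := by
  obtain ⟨e, he⟩ := h
  refine (mDist_le e).trans (mul_le_one₀ (opC_le zero_le_one fun x => ?_) opC_nonneg
    (opC_le zero_le_one fun x => ?_))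
  · simp [he]
  · simpa using (he (e.symm x)).symm.le

theorem mDist_le_of_abs_sub_le {r : ℝ} (hr₀ : 0 ≤ r) (hr₁ : r < 1)
    (h : ∀ x, |N₂.toFun x - N₁.toFun x| ≤ r * N₁.toFun x) :
    mDist n N₁ N₂ ≤ (1 + r) / (1 - r) := by
  have hr : 0 < 1 - r := sub_pos.2 hr₁
  rw [div_eq_mul_inv]
  refine mDist_le_mul_of_le_mul (by linarith) (inv_nonneg.2 hr.le) (fun x => ?_) fun x => ?_
  · linarith [(abs_le.1 (h x)).2]
  · rw [inv_mul_eq_div, le_div_iff₀ hr]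
    linarith [(abs_le.1 (h x)).1]

end BanachMazur

namespace Mink

variable {n : ℕ}

def mk (N : MNorm n) : Mink n := Quotient.mk (mnormSetoid n) N

theorem mDist_out_mk_le (N₁ N₂ : MNorm n) :
    mDist n (mk N₁).out (mk N₂).out ≤ mDist n N₁ N₂ := by
  have h₁ := mDist_le_one_of_rel (Quotient.mk_out (s := mnormSetoid n) N₁)
  have h₂ := mDist_le_one_of_rel ((mnormSetoid n).symm (Quotient.mk_out (s := mnormSetoid n) N₂))
  have h₂' : mDist n N₁ (mk N₂).out ≤ mDist n N₁ N₂ :=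
    mDist_triangle.trans (mul_le_of_le_one_right mDist_nonneg h₂)
  calc _ ≤ mDist n _ N₁ * mDist n N₁ _ := mDist_triangle
    _ ≤ 1 * mDist n N₁ N₂ := mul_le_mul h₁ h₂' mDist_nonneg zero_le_one
    _ = mDist n N₁ N₂ := one_mul _

/-- Continuity into `𝔐_n` only needs the Banach–Mazur distance to the value at `t₀` to tend
to `1`; the triangle inequality takes care of balls centred elsewhere. -/
theorem continuous_mk_of_eventually_mDist_lt (hn : 0 < n) {T : Type*} [TopologicalSpace T]
    {N : T → MNorm n} (h : ∀ t₀, ∀ c > 1, ∀ᶠ t in 𝓝 t₀, mDist n (N t₀) (N t) < c) :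
    Continuous fun t => mk (N t) := by
  refine continuous_generateFrom_iff.2 ?_
  rintro _ ⟨P, ε, -, rfl⟩
  refine isOpen_iff_mem_nhds.2 fun t₀ ht₀ => ?_
  set m₀ := mDist n P.out (mk (N t₀)).out
  have hm₀ : 0 < m₀ := zero_lt_one.trans_le (one_le_mDist hn)
  have hm₀ε : m₀ < Real.exp ε := (Real.log_lt_iff_lt_exp hm₀).1 ht₀
  filter_upwards [h t₀ (Real.exp ε / m₀) ((one_lt_div hm₀).2 hm₀ε)] with t ht
  refine (Real.log_lt_iff_lt_exp (zero_lt_one.trans_le (one_le_mDist hn))).2 ?_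
  calc _ ≤ m₀ * mDist n _ _ := mDist_triangle
    _ ≤ m₀ * mDist n (N t₀) (N t) := mul_le_mul_of_nonneg_left (mDist_out_mk_le _ _) hm₀.le
    _ < m₀ * (Real.exp ε / m₀) := mul_lt_mul_of_pos_left ht hm₀
    _ = Real.exp ε := mul_div_cancel₀ _ hm₀.ne'

theorem continuous_mk_ofEmbedding_add_smul {X : Type*} [NormedAddCommGroup X] [NormedSpace ℝ X]
    (hn : 0 < n) (f g : (Fin n → ℝ) →ₗ[ℝ] X) (hfg : ∀ t : ℝ, Injective (f + t • g)) :
    Continuous fun t : ℝ => mk (MNorm.ofEmbedding _ (hfg t)) := by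
  refine continuous_mk_of_eventually_mDist_lt hn fun t₀ c hc => ?_
  obtain ⟨K, hK₀, hK⟩ := LinearMap.exists_norm_le_mul_norm_of_injective (hfg t₀) g
  have hr : Tendsto (fun t => |t - t₀| * K) (𝓝 t₀) (𝓝 0) := by
    simpa using (show Continuous fun t : ℝ => |t - t₀| * K by fun_prop).tendsto t₀
  have hq : Tendsto (fun t => (1 + |t - t₀| * K) / (1 - |t - t₀| * K)) (𝓝 t₀) (𝓝 1) := by
    simpa [Pi.div_def] using (hr.const_add 1).div (hr.const_sub 1) (by norm_num)
  filter_upwards [hr.eventually_lt_const zero_lt_one, hq.eventually_lt_const hc] with t hr₁ hq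
  refine (mDist_le_of_abs_sub_le (by positivity) hr₁ fun x => ?_).trans_lt hq
  calc |‖(f + t • g) x‖ - ‖(f + t₀ • g) x‖| ≤ ‖(f + t • g) x - (f + t₀ • g) x‖ :=
        abs_norm_sub_norm_le _ _
    _ = ‖(t - t₀) • g x‖ := by
        congr 1; simp only [LinearMap.add_apply, LinearMap.smul_apply]; module
    _ = |t - t₀| * ‖g x‖ := by rw [norm_smul, Real.norm_eq_abs]
    _ ≤ |t - t₀| * (K * ‖(f + t₀ • g) x‖) := mul_le_mul_of_nonneg_left (hK x) (abs_nonneg _)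
    _ = _ := (mul_assoc _ _ _).symm

instance : Subsingleton (Mink 0) :=
  ⟨fun P Q => Quotient.inductionOn₂ P Q fun N₁ N₂ => Quotient.sound ⟨LinearEquiv.refl ℝ _,
    fun x => by rw [LinearEquiv.refl_apply, Subsingleton.elim x 0, N₁.map_zero, N₂.map_zero]⟩⟩

end Mink

section HmSet

variable {n : ℕ} {X : Type*} [NormedAddCommGroup X] [NormedSpace ℝ X]

theorem mem_HmSet_iff {P : Mink n} :
    P ∈ HmSet n X ↔ ∃ (f : (Fin n → ℝ) →ₗ[ℝ] X) (hf : Injective f),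
      P = Mink.mk (MNorm.ofEmbedding f hf) := by
  constructor
  · rintro ⟨f, hf, hP⟩
    exact ⟨f, hf, (Quotient.out_eq (s := mnormSetoid n) P).symm.trans
      (congrArg Mink.mk (MNorm.ext fun v => (hP v).symm))⟩
  · rintro ⟨f, hf, rfl⟩
    obtain ⟨e, he⟩ := Quotient.mk_out (s := mnormSetoid n) (MNorm.ofEmbedding f hf)
    exact ⟨f ∘ₗ e.toLinearMap, hf.comp e.injective, he⟩

theorem joinedIn_HmSet_mk_ofEmbedding (hn : 0 < n) {f h : (Fin n → ℝ) →ₗ[ℝ] X}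
    (hf : Injective f) (hh : Injective h) (hseg : ∀ t : ℝ, Injective (f + t • (h - f))) :
    JoinedIn (HmSet n X) (Mink.mk (MNorm.ofEmbedding f hf)) (Mink.mk (MNorm.ofEmbedding h hh)) := by
  refine JoinedIn.ofLine (Mink.continuous_mk_ofEmbedding_add_smul hn f _ hseg).continuousOn
    ?_ ?_ ?_
  · congr 1; exact MNorm.ext fun x => by simp [MNorm.ofEmbedding]
  · congr 1; exact MNorm.ext fun x => by simp [MNorm.ofEmbedding]
  · rintro _ ⟨t, -, rfl⟩
    exact mem_HmSet_iff.2 ⟨_, _, rfl⟩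

theorem HmSet_nonempty (hX : ¬ FiniteDimensional ℝ X) (n : ℕ) : (HmSet n X).Nonempty := by
  obtain ⟨h, hh⟩ := exists_injective_mkQ_comp hX ⊥ n
  exact ⟨_, mem_HmSet_iff.2 ⟨h, hh.of_comp, rfl⟩⟩

theorem HmSet_isPathConnected (hX : ¬ FiniteDimensional ℝ X) (hn : 0 < n) :
    IsPathConnected (HmSet n X) := by
  refine isPathConnected_iff.2 ⟨HmSet_nonempty hX n, ?_⟩
  simp only [mem_HmSet_iff]
  rintro _ ⟨f, hf, rfl⟩ _ ⟨g, hg, rfl⟩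
  obtain ⟨h, hh⟩ := exists_injective_mkQ_comp hX (LinearMap.range f ⊔ LinearMap.range g) n
  have hfh := injective_add_smul_sub_of_injective_mkQ_comp hf le_sup_left hh
  have hgh := injective_add_smul_sub_of_injective_mkQ_comp hg le_sup_right hh
  exact (joinedIn_HmSet_mk_ofEmbedding hn hf hh.of_comp hfh).trans
    (joinedIn_HmSet_mk_ofEmbedding hn hg hh.of_comp hgh).symm

end HmSet

theorem HmSet_isConnected_of_infiniteDimensional_general
    (X : Type u) [NormedAddCommGroup X] [NormedSpace ℝ X]
    (hinf : ¬ FiniteDimensional ℝ X) (n : ℕ) :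
    IsConnected (HmSet n X) := by
  rcases n.eq_zero_or_pos with rfl | hn
  · exact ⟨HmSet_nonempty hinf 0, Set.subsingleton_of_subsingleton.isPreconnected⟩
  · exact (HmSet_isPathConnected hinf hn).isConnected

/-- For every infinite-dimensional real Banach space `X` and every `n`,
the set `H_n(X)` of isometry classes of `n`-dimensional subspaces of `X` is a connected
subset of the Minkowski compact `𝔐_n`. -/
theorem HmSet_isConnected_of_infiniteDimensional
    (X : Type u) [NormedAddCommGroup X] [NormedSpace ℝ X] [CompleteSpace X]
    (hinf : ¬ FiniteDimensional ℝ X) (n : ℕ) :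
    IsConnected (HmSet n X) :=
  HmSet_isConnected_of_infiniteDimensional_general X hinf n
end
end
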